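/- For all positive integers a and i, one has the polynomial identity [3a+i choose a+i]_q = ∑_{k≥0} q^{(a−k)(i−k)} · ( [i+k choose 2k]_q + q^{a+i} · [i+k−1 choose 2k−1]_q ) · [3a+i choose a−k]_q. -/
import Mathlib


open Finset Polynomial

/-- The Gaussian binomial coefficient `[n choose k]_q`, i.e. the q-binomial
coefficient `[n]!_q / ([k]!_q [n-k]!_q)`, as a polynomial in `q` with integer
coefficients, defined via the q-Pascal recurrence. It is `0` when `k > n`. -/
noncomputable def qbinom : ℕ → ℕ → Polynomial ℤ
  | _, 0 => 1
  | 0, _ + 1 => 0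
  | n + 1, k + 1 => qbinom n k + Polynomial.X ^ (k + 1) * qbinom n (k + 1)
  termination_by n k => (n, k)

/-- The Gaussian binomial with integer lower index, equal to `0` for negative
lower index. -/
noncomputable def qbinomZ (n : ℕ) (k : ℤ) : Polynomial ℤ :=
  if 0 ≤ k then qbinom n k.toNat else 0

lemma qbinom_zero (n : ℕ) : qbinom n 0 = 1 := by cases n <;> simp [qbinom]

lemma qbinom_zero_succ (k : ℕ) : qbinom 0 (k+1) = 0 := by simp [qbinom]

lemma qbinom_pascal (n k : ℕ) :
    qbinom (n+1) (k+1) = qbinom n k + X ^ (k + 1) * qbinom n (k + 1) := by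
  simp [qbinom]

lemma qbinom_eq_zero : ∀ {n k : ℕ}, n < k → qbinom n k = 0 := by
  intro n
  induction n with
  | zero => intro k hk; obtain ⟨k, rfl⟩ := Nat.exists_eq_succ_of_ne_zero (by omega : k ≠ 0); simp [qbinom]
  | succ n ih =>
    intro k hk
    obtain ⟨k, rfl⟩ := Nat.exists_eq_succ_of_ne_zero (by omega : k ≠ 0)
    rw [qbinom_pascal, ih (by omega), ih (by omega)]
    ring

lemma qbinom_self (n : ℕ) : qbinom n n = 1 := by
  induction n with
  | zero => simp [qbinom]
  | succ n ih => rw [qbinom_pascal, ih, qbinom_eq_zero (by omega)]; ring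

lemma qbinom_one_succ (n : ℕ) : qbinom (n+1) 1 = X ^ n + qbinom n 1 := by
  induction n with
  | zero =>
    rw [show (1:ℕ) = 0+1 from rfl, qbinom_pascal, qbinom_zero, qbinom_zero_succ]; ring
  | succ n ih =>
    calc qbinom (n+2) 1 = qbinom (n+1) 0 + X^(0+1) * qbinom (n+1) (0+1) := qbinom_pascal (n+1) 0
    _ = 1 + X^1*(X^n + qbinom n 1) := by rw [qbinom_zero]; exact congrArg _ (congrArg _ ih)
    _ = X^(n+1) + (qbinom n 0 + X^(0+1) * qbinom n (0+1)) := by rw [qbinom_zero, pow_succ]; ring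
    _ = X^(n+1) + qbinom (n+1) 1 := by rw [← qbinom_pascal n 0]
  
lemma qbinom_one_geom (n : ℕ) : (1 - X) * qbinom n 1 = 1 - X ^ n := by
  induction n with
  | zero => rw [show (1:ℕ) = 0+1 from rfl, qbinom_zero_succ]; ring
  | succ n ih => rw [qbinom_one_succ, pow_succ]; linear_combination ih

/-- dual Pascal -/
lemma qbinom_pascal' (n k : ℕ) :
    qbinom (n+1) (k+1) = X ^ (n - k) * qbinom n k + qbinom n (k+1) := by
  induction n generalizing k with
  | zero =>
    cases k with
    | zero => simp [qbinom]
    | succ k =>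
      rw [qbinom_eq_zero (show 0+1 < k+1+1 by omega), qbinom_eq_zero (show 0 < k+1 by omega),
        qbinom_zero_succ]
      ring
  | succ n ih =>
    cases k with
    | zero =>
      rw [show n+1-0 = n+1 by omega, qbinom_zero, qbinom_one_succ]
      ring
    | succ k =>
      rcases Nat.lt_or_ge n (k+1) with h | h
      · rcases Nat.lt_or_ge n k with h2 | h2
        · rw [qbinom_eq_zero (show n+1+1 < k+1+1 by omega),
            qbinom_eq_zero (show n+1 < k+1+1 by omega),
            qbinom_eq_zero (show n+1 < k+1 by omega)]
          ring
        · have : n = k := by omega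
          subst this
          rw [qbinom_self, qbinom_self, qbinom_eq_zero (show n+1 < n+1+1 by omega),
            show n+1-(n+1) = 0 by omega]
          ring
      · obtain ⟨d, rfl⟩ : ∃ d, n = k + 1 + d := ⟨n - (k+1), by omega⟩
        have P0 := qbinom_pascal (k+1+d+1) (k+1)
        have I1 := ih k
        have I2 := ih (k+1)
        have P1 := qbinom_pascal (k+1+d) k
        have P2 := qbinom_pascal (k+1+d) (k+1)
        rw [show k+1+d - k = d+1 by omega] at I1
        rw [show k+1+d - (k+1) = d by omega] at I2
        rw [show k+1+d+1 - (k+1) = d+1 by omega]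
        linear_combination P0 + I1 + X^(k+1+1) * I2 - X^(d+1) * P1 - P2

/-- contiguous relation: (1 - q^{n-m}) [n m] = (1 - q^{m+1}) [n m+1] -/
lemma qbinom_contig (n m : ℕ) :
    (1 - X ^ (n - m)) * qbinom n m = (1 - X ^ (m+1)) * qbinom n (m+1) := by
  induction n generalizing m with
  | zero =>
    rw [show (0:ℕ) - m = 0 by omega, qbinom_zero_succ]
    ring
  | succ n ih =>
    rcases Nat.lt_or_ge n m with h | h
    · rcases Nat.lt_or_ge (n+1) m with h2 | h2
      · rw [qbinom_eq_zero (show n+1 < m by omega), qbinom_eq_zero (show n+1 < m+1 by omega)]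
        ring
      · have : m = n + 1 := by omega
        subst this
        rw [qbinom_self, qbinom_eq_zero (show n+1 < n+1+1 by omega),
          show n+1-(n+1) = 0 by omega]
        ring
    · cases m with
      | zero =>
        rw [qbinom_zero, show n+1-0 = n+1 by omega, show (0:ℕ)+1 = 1 from rfl, pow_one]
        linear_combination -qbinom_one_geom (n+1)
      | succ m =>
        obtain ⟨d, rfl⟩ : ∃ d, n = m + 1 + d := ⟨n - (m+1), by omega⟩
        have ih1 := ih m
        have ih2 := ih (m+1)
        rw [show m+1+d - m = d+1 by omega] at ih1
        rw [show m+1+d - (m+1) = d by omega] at ih2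
        have DP := qbinom_pascal' (m+1+d) m
        have P := qbinom_pascal (m+1+d) (m+1)
        rw [show m+1+d - m = d+1 by omega] at DP
        rw [show m+1+d+1 - (m+1) = d+1 by omega]
        linear_combination (1 - X^(d+1)) * DP - (1 - X^(m+1+1)) * P
          + X^(d+1) * ih1 + X^(m+1+1) * ih2
/-- top shift: (1-q^{n+1}) [n m] = (1-q^{n+1-m}) [n+1 m] -/
lemma qbinom_top_shift (n m : ℕ) :
    (1 - X^(n+1)) * qbinom n m = (1 - X^(n+1-m)) * qbinom (n+1) m := by
  cases m with
  | zero => rw [qbinom_zero, qbinom_zero, show n+1-0 = n+1 by omega]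
  | succ m =>
    rcases Nat.lt_or_ge n m with h | h
    · rw [qbinom_eq_zero (show n < m+1 by omega), qbinom_eq_zero (show n+1 < m+1 by omega)]
      ring
    · obtain ⟨d, rfl⟩ : ∃ d, n = m + d := ⟨n - m, by omega⟩
      have P := qbinom_pascal (m+d) m
      have C := qbinom_contig (m+d) m
      rw [show m+d-m = d by omega] at C
      rw [show m+d+1-(m+1) = d by omega]
      linear_combination (-(1 - X^(d:ℕ))) * P - C

lemma one_sub_X_pow_ne_zero (e : ℕ) : (1 - X^(e+1) : Polynomial ℤ) ≠ 0 := by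
  intro h
  have h2 := congrArg (fun p => Polynomial.coeff p 0) h
  simp [Polynomial.coeff_X_pow] at h2

lemma cancel_factor (e : ℕ) {A B : Polynomial ℤ}
    (h : (1 - X^(e+1)) * A = (1 - X^(e+1)) * B) : A = B :=
  mul_left_cancel₀ (one_sub_X_pow_ne_zero e) h

noncomputable def Tt (a i k : ℕ) : Polynomial ℤ :=
  Polynomial.X ^ ((a - k) * (i - k)) *
    (qbinom (i + k) (2 * k) +
      Polynomial.X ^ (a + i) * qbinomZ (i + k - 1) (2 * (k : ℤ) - 1)) *
    qbinom (3 * a + i) (a - k)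

noncomputable def Gg (a i j : ℕ) : Polynomial ℤ :=
  if j = 0 ∨ a < j then 0 else
    X ^ ((a + 1 - j) * (i + 1 - j)) *
      ((1 - X ^ (3*a + i + 1)) * (qbinom (i + j - 1) (2*j - 2) * qbinom (3*a + i) (a - j)))

lemma qbinomZ_ksucc (n k : ℕ) : qbinomZ n (2 * ((k:ℕ)+1 : ℤ) - 1) = qbinom n (2*k+1) := by
  rw [qbinomZ, if_pos (by omega)]
  congr 1
  omega

lemma Tt_zero (a i : ℕ) : Tt a i 0 = X^(a*i) * qbinom (3*a+i) a := by
  rw [Tt, show i+0 = i by omega, show 2*0 = 0 by omega, qbinom_zero,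
    show a-0 = a by omega, show i-0 = i by omega]
  rw [show (2 * ((0:ℕ):ℤ) - 1) = -1 by norm_num, qbinomZ, if_neg (by norm_num)]
  ring

lemma Tt_succ (a i k : ℕ) : Tt a i (k+1) =
    X^((a-(k+1))*(i-(k+1))) * (qbinom (i+k+1) (2*k+2) + X^(a+i) * qbinom (i+k) (2*k+1)) *
      qbinom (3*a+i) (a-(k+1)) := by
  rw [Tt, show (((k:ℕ)+1 : ℕ) : ℤ) = ((k:ℕ):ℤ) + 1 by push_cast; ring, qbinomZ_ksucc,
    show i+(k+1) = i+k+1 by omega, show i+k+1-1 = i+k by omega, show 2*(k+1) = 2*k+2 by omega]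

/-- certificate, main region 1 ≤ k < a, k ≤ i -/
lemma cert_main (K s t : ℕ) :
    (1 - X^(2*K+s+t+4)) * (X^((s+1)*(t+1)) * (qbinom (2*K+t+3) (2*K+2) + X^(2*K+s+t+4) * qbinom (2*K+t+2) (2*K+1)) * qbinom (4*K+3*s+t+8) (s+1))
  - (1 - X^(4*K+3*s+t+8)) * (X^((s+1)*t) * (qbinom (2*K+t+2) (2*K+2) + X^(2*K+s+t+3) * qbinom (2*K+t+1) (2*K+1)) * qbinom (4*K+3*s+t+7) (s+1))
  = X^((s+2)*(t+1)) * ((1 - X^(4*K+3*s+t+8)) * (qbinom (2*K+t+1) (2*K) * qbinom (4*K+3*s+t+7) (s+1)))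
  - X^((s+1)*t) * ((1 - X^(4*K+3*s+t+8)) * (qbinom (2*K+t+2) (2*K+2) * qbinom (4*K+3*s+t+7) s)) := by
  have p1 := qbinom_pascal (2*K+t+2) (2*K+1)
  rw [show 2*K+t+2+1 = 2*K+t+3 by omega, show 2*K+1+1 = 2*K+2 by omega] at p1
  have p2 := qbinom_pascal (2*K+t+1) (2*K)
  rw [show 2*K+t+1+1 = 2*K+t+2 by omega, show 2*K+1 = 2*K+1 by omega] at p2
  have pC := qbinom_pascal (4*K+3*s+t+7) s
  rw [show 4*K+3*s+t+7+1 = 4*K+3*s+t+8 by omega] at pC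
  have e2 := qbinom_contig (2*K+t+2) (2*K+1)
  rw [show 2*K+t+2-(2*K+1) = t+1 by omega, show 2*K+1+1 = 2*K+2 by omega] at e2
  rw [p2] at e2
  have e3 := qbinom_contig (4*K+3*s+t+7) s
  rw [show 4*K+3*s+t+7-s = 4*K+2*s+t+7 by omega] at e3
  apply cancel_factor (2*K)
  apply cancel_factor (2*K+1)
  apply cancel_factor (4*K+2*s+t+6)
  rw [show 2*K+1+1 = 2*K+2 by omega, show 4*K+2*s+t+6+1 = 4*K+2*s+t+7 by omega,
    show 2*K+0+1 = 2*K+1 by omega]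
  linear_combination (norm := ring1)
    (X^(1+1*s+1*t+1*(s*t))*(qbinom (4*K+3*s+t+8) (s+1)) - X^(2+2*K+1*s+1*t+1*(s*t))*(qbinom (4*K+3*s+t+8) (s+1)) - X^(3+2*K+1*s+1*t+1*(s*t))*(qbinom (4*K+3*s+t+8) (s+1)) + X^(4+4*K+1*s+1*t+1*(s*t))*(qbinom (4*K+3*s+t+8) (s+1)) - X^(5+2*K+2*s+2*t+1*(s*t))*(qbinom (4*K+3*s+t+8) (s+1)) + X^(6+4*K+2*s+2*t+1*(s*t))*(qbinom (4*K+3*s+t+8) (s+1)) + X^(7+4*K+2*s+2*t+1*(s*t))*(qbinom (4*K+3*s+t+8) (s+1)) - X^(8+4*K+3*s+2*t+1*(s*t))*(qbinom (4*K+3*s+t+8) (s+1)) - X^(8+6*K+2*s+2*t+1*(s*t))*(qbinom (4*K+3*s+t+8) (s+1)) + X^(9+6*K+3*s+2*t+1*(s*t))*(qbinom (4*K+3*s+t+8) (s+1)) + X^(10+6*K+3*s+2*t+1*(s*t))*(qbinom (4*K+3*s+t+8) (s+1)) - X^(11+8*K+3*s+2*t+1*(s*t))*(qbinom (4*K+3*s+t+8)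 (s+1)) + X^(12+6*K+4*s+3*t+1*(s*t))*(qbinom (4*K+3*s+t+8) (s+1)) - X^(13+8*K+4*s+3*t+1*(s*t))*(qbinom (4*K+3*s+t+8) (s+1)) - X^(14+8*K+4*s+3*t+1*(s*t))*(qbinom (4*K+3*s+t+8) (s+1)) + X^(15+10*K+4*s+3*t+1*(s*t))*(qbinom (4*K+3*s+t+8) (s+1))) * p1
  + (X^(1+1*s+1*t+1*(s*t))*(qbinom (4*K+3*s+t+8) (s+1)) - X^(2+2*K+1*s+1*t+1*(s*t))*(qbinom (4*K+3*s+t+8) (s+1)) - X^(3+2*K+1*s+1*t+1*(s*t))*(qbinom (4*K+3*s+t+8) (s+1)) + X^(4+4*K+1*s+1*t+1*(s*t))*(qbinom (4*K+3*s+t+8) (s+1)) - X^(8+4*K+3*s+2*t+1*(s*t))*(qbinom (4*K+3*s+t+8) (s+1)) - X^(9+4*K+3*s+3*t+1*(s*t))*(qbinom (4*K+3*s+t+8) (s+1)) + X^(9+6*K+3*s+2*t+1*(s*t))*(qbinom (4*K+3*s+t+8) (s+1)) + X^(10+6*K+3*s+2*t+1*(s*t))*(qbinom (4*K+3*s+t+8)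 (s+1)) + X^(10+6*K+3*s+3*t+1*(s*t))*(qbinom (4*K+3*s+t+8) (s+1)) + X^(11+6*K+3*s+3*t+1*(s*t))*(qbinom (4*K+3*s+t+8) (s+1)) - X^(11+8*K+3*s+2*t+1*(s*t))*(qbinom (4*K+3*s+t+8) (s+1)) - X^(12+8*K+3*s+3*t+1*(s*t))*(qbinom (4*K+3*s+t+8) (s+1)) + X^(16+8*K+5*s+4*t+1*(s*t))*(qbinom (4*K+3*s+t+8) (s+1)) - X^(17+10*K+5*s+4*t+1*(s*t))*(qbinom (4*K+3*s+t+8) (s+1)) - X^(18+10*K+5*s+4*t+1*(s*t))*(qbinom (4*K+3*s+t+8) (s+1)) + X^(19+12*K+5*s+4*t+1*(s*t))*(qbinom (4*K+3*s+t+8) (s+1))) * p2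
  + (X^(1+1*s+1*t+1*(s*t))*(qbinom (2*K+t+1) (2*K)) - X^(2+2*K+1*s+1*t+1*(s*t))*(qbinom (2*K+t+1) (2*K)) + X^(2+2*K+1*s+1*t+1*(s*t))*(qbinom (2*K+t+1) (2*K+1)) - X^(3+2*K+1*s+1*t+1*(s*t))*(qbinom (2*K+t+1) (2*K)) + X^(3+2*K+1*s+1*t+1*(s*t))*(qbinom (2*K+t+2) (2*K+2)) - X^(3+4*K+1*s+1*t+1*(s*t))*(qbinom (2*K+t+1) (2*K+1)) + X^(4+4*K+1*s+1*t+1*(s*t))*(qbinom (2*K+t+1) (2*K)) - X^(4+4*K+1*s+1*t+1*(s*t))*(qbinom (2*K+t+1) (2*K+1)) - X^(4+4*K+1*s+1*t+1*(s*t))*(qbinom (2*K+t+2) (2*K+2)) - X^(5+4*K+1*s+1*t+1*(s*t))*(qbinom (2*K+t+2) (2*K+2)) + X^(5+6*K+1*s+1*t+1*(s*t))*(qbinom (2*K+t+1) (2*K+1)) + X^(6+6*K+1*s+1*t+1*(s*t))*(qbinom (2*K+t+2) (2*K+2)) - X^(7+4*K+2*s+2*t+1*(s*t))*(qbinom (2*K+t+2)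 (2*K+2)) - X^(8+4*K+3*s+2*t+1*(s*t))*(qbinom (2*K+t+1) (2*K)) + X^(8+6*K+2*s+2*t+1*(s*t))*(qbinom (2*K+t+2) (2*K+2)) - X^(9+4*K+3*s+3*t+1*(s*t))*(qbinom (2*K+t+1) (2*K)) + X^(9+6*K+2*s+2*t+1*(s*t))*(qbinom (2*K+t+2) (2*K+2)) + X^(9+6*K+3*s+2*t+1*(s*t))*(qbinom (2*K+t+1) (2*K)) - X^(9+6*K+3*s+2*t+1*(s*t))*(qbinom (2*K+t+1) (2*K+1)) + X^(10+6*K+3*s+2*t+1*(s*t))*(qbinom (2*K+t+1) (2*K)) - X^(10+6*K+3*s+2*t+1*(s*t))*(qbinom (2*K+t+2) (2*K+2)) + X^(10+6*K+3*s+3*t+1*(s*t))*(qbinom (2*K+t+1) (2*K)) - X^(10+6*K+3*s+3*t+1*(s*t))*(qbinom (2*K+t+1) (2*K+1)) - X^(10+8*K+2*s+2*t+1*(s*t))*(qbinom (2*K+t+2) (2*K+2)) + X^(10+8*K+3*s+2*t+1*(s*t))*(qbinom (2*K+t+1) (2*K+1)) + X^(11+6*K+3*s+3*t+1*(s*t))*(qbinom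 (2*K+t+1) (2*K)) - X^(11+8*K+3*s+2*t+1*(s*t))*(qbinom (2*K+t+1) (2*K)) + X^(11+8*K+3*s+2*t+1*(s*t))*(qbinom (2*K+t+1) (2*K+1)) + X^(11+8*K+3*s+2*t+1*(s*t))*(qbinom (2*K+t+2) (2*K+2)) + X^(11+8*K+3*s+3*t+1*(s*t))*(qbinom (2*K+t+1) (2*K+1)) + X^(12+8*K+3*s+2*t+1*(s*t))*(qbinom (2*K+t+2) (2*K+2)) - X^(12+8*K+3*s+3*t+1*(s*t))*(qbinom (2*K+t+1) (2*K)) + X^(12+8*K+3*s+3*t+1*(s*t))*(qbinom (2*K+t+1) (2*K+1)) - X^(12+10*K+3*s+2*t+1*(s*t))*(qbinom (2*K+t+1) (2*K+1)) - X^(13+10*K+3*s+2*t+1*(s*t))*(qbinom (2*K+t+2) (2*K+2)) - X^(13+10*K+3*s+3*t+1*(s*t))*(qbinom (2*K+t+1) (2*K+1)) + X^(14+8*K+4*s+3*t+1*(s*t))*(qbinom (2*K+t+2) (2*K+2)) - X^(15+10*K+4*s+3*t+1*(s*t))*(qbinom (2*K+t+2) (2*K+2)) + X^(16+8*K+5*s+4*t+1*(s*t))*(qbinom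 (2*K+t+1) (2*K)) - X^(16+10*K+4*s+3*t+1*(s*t))*(qbinom (2*K+t+2) (2*K+2)) - X^(17+10*K+5*s+4*t+1*(s*t))*(qbinom (2*K+t+1) (2*K)) + X^(17+10*K+5*s+4*t+1*(s*t))*(qbinom (2*K+t+1) (2*K+1)) + X^(17+12*K+4*s+3*t+1*(s*t))*(qbinom (2*K+t+2) (2*K+2)) - X^(18+10*K+5*s+4*t+1*(s*t))*(qbinom (2*K+t+1) (2*K)) - X^(18+12*K+5*s+4*t+1*(s*t))*(qbinom (2*K+t+1) (2*K+1)) + X^(19+12*K+5*s+4*t+1*(s*t))*(qbinom (2*K+t+1) (2*K)) - X^(19+12*K+5*s+4*t+1*(s*t))*(qbinom (2*K+t+1) (2*K+1)) + X^(20+14*K+5*s+4*t+1*(s*t))*(qbinom (2*K+t+1) (2*K+1))) * pC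
  + (X^(1*t+1*(s*t))*(qbinom (2*K+t+2) (2*K+2)) + X^(1+1*s+1*t+1*(s*t))*(qbinom (2*K+t+1) (2*K)) - X^(1+2*K+1*t+1*(s*t))*(qbinom (2*K+t+2) (2*K+2)) - X^(2+2*K+1*t+1*(s*t))*(qbinom (2*K+t+2) (2*K+2)) - X^(2+2*K+1*s+1*t+1*(s*t))*(qbinom (2*K+t+1) (2*K)) + X^(2+2*K+1*s+1*t+1*(s*t))*(qbinom (2*K+t+1) (2*K+1)) - X^(3+2*K+1*s+1*t+1*(s*t))*(qbinom (2*K+t+1) (2*K)) + X^(3+2*K+1*s+1*t+1*(s*t))*(qbinom (2*K+t+2) (2*K+2)) + X^(3+4*K+1*t+1*(s*t))*(qbinom (2*K+t+2) (2*K+2)) - X^(3+4*K+1*s+1*t+1*(s*t))*(qbinom (2*K+t+1) (2*K+1)) + X^(4+4*K+1*s+1*t+1*(s*t))*(qbinom (2*K+t+1) (2*K)) - X^(4+4*K+1*s+1*t+1*(s*t))*(qbinom (2*K+t+1) (2*K+1)) - X^(4+4*K+1*s+1*t+1*(s*t))*(qbinom (2*K+t+2) (2*K+2)) - X^(5+4*K+1*s+1*t+1*(s*t))*(qbinom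 (2*K+t+2) (2*K+2)) + X^(5+6*K+1*s+1*t+1*(s*t))*(qbinom (2*K+t+1) (2*K+1)) + X^(6+6*K+1*s+1*t+1*(s*t))*(qbinom (2*K+t+2) (2*K+2)) - X^(7+4*K+2*s+2*t+1*(s*t))*(qbinom (2*K+t+2) (2*K+2)) - X^(8+4*K+3*s+2*t+1*(s*t))*(qbinom (2*K+t+2) (2*K+2)) + X^(8+6*K+2*s+2*t+1*(s*t))*(qbinom (2*K+t+2) (2*K+2)) - X^(9+4*K+3*s+3*t+1*(s*t))*(qbinom (2*K+t+1) (2*K)) + X^(9+6*K+2*s+2*t+1*(s*t))*(qbinom (2*K+t+2) (2*K+2)) + X^(9+6*K+3*s+2*t+1*(s*t))*(qbinom (2*K+t+2) (2*K+2)) + X^(10+6*K+3*s+2*t+1*(s*t))*(qbinom (2*K+t+2) (2*K+2)) + X^(10+6*K+3*s+3*t+1*(s*t))*(qbinom (2*K+t+1) (2*K)) - X^(10+6*K+3*s+3*t+1*(s*t))*(qbinom (2*K+t+1) (2*K+1)) - X^(10+8*K+2*s+2*t+1*(s*t))*(qbinom (2*K+t+2) (2*K+2)) + X^(11+6*K+3*s+3*t+1*(s*t))*(qbinom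 (2*K+t+1) (2*K)) - X^(11+8*K+3*s+2*t+1*(s*t))*(qbinom (2*K+t+2) (2*K+2)) + X^(11+8*K+3*s+3*t+1*(s*t))*(qbinom (2*K+t+1) (2*K+1)) - X^(12+8*K+3*s+3*t+1*(s*t))*(qbinom (2*K+t+1) (2*K)) + X^(12+8*K+3*s+3*t+1*(s*t))*(qbinom (2*K+t+1) (2*K+1)) - X^(13+10*K+3*s+3*t+1*(s*t))*(qbinom (2*K+t+1) (2*K+1))) * e3
  + (X^(1+1*s+1*t+1*(s*t))*(qbinom (4*K+3*s+t+7) (s+1)) - X^(2+2*K+1*s+1*t+1*(s*t))*(qbinom (4*K+3*s+t+7) (s+1)) - X^(3+2*K+1*s+1*t+1*(s*t))*(qbinom (4*K+3*s+t+7) (s+1)) + X^(4+4*K+1*s+1*t+1*(s*t))*(qbinom (4*K+3*s+t+7) (s+1)) - X^(9+4*K+4*s+2*t+1*(s*t))*(qbinom (4*K+3*s+t+7) (s+1)) + X^(10+6*K+4*s+2*t+1*(s*t))*(qbinom (4*K+3*s+t+7) (s+1)) + X^(11+6*K+4*s+2*t+1*(s*t))*(qbinom (4*K+3*s+t+7)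 (s+1)) - X^(12+8*K+4*s+2*t+1*(s*t))*(qbinom (4*K+3*s+t+7) (s+1))) * e2

/-- certificate, diagonal k = a ≤ i -/
lemma cert_diag (K t : ℕ) :
    (1 - X^(2*K+t+3)) * (qbinom (2*K+t+3) (2*K+2) + X^(2*K+t+3) * qbinom (2*K+t+2) (2*K+1))
  - (1 - X^(4*K+t+5)) * (qbinom (2*K+t+2) (2*K+2) + X^(2*K+t+2) * qbinom (2*K+t+1) (2*K+1))
  = X^(t+1) * ((1 - X^(4*K+t+5)) * qbinom (2*K+t+1) (2*K)) := by
  have p1 := qbinom_pascal (2*K+t+2) (2*K+1)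
  rw [show 2*K+t+2+1 = 2*K+t+3 by omega, show 2*K+1+1 = 2*K+2 by omega] at p1
  have p2 := qbinom_pascal (2*K+t+1) (2*K)
  rw [show 2*K+t+1+1 = 2*K+t+2 by omega] at p2
  have e2 := qbinom_contig (2*K+t+2) (2*K+1)
  rw [show 2*K+t+2-(2*K+1) = t+1 by omega, show 2*K+1+1 = 2*K+2 by omega] at e2
  rw [p2] at e2
  apply cancel_factor (2*K)
  apply cancel_factor (2*K+1)
  rw [show 2*K+1+1 = 2*K+2 by omega, show 2*K+0+1 = 2*K+1 by omega]
  linear_combination (norm := ring1)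
    ((1:Polynomial ℤ) - X^(1+2*K) - X^(2+2*K) - X^(3+2*K+1*t) + X^(3+4*K) + X^(4+4*K+1*t) + X^(5+4*K+1*t) - X^(6+6*K+1*t)) * p1
  + ((1:Polynomial ℤ) - X^(1+2*K) - X^(2+2*K) + X^(3+4*K) - X^(6+4*K+2*t) + X^(7+6*K+2*t) + X^(8+6*K+2*t) - X^(9+8*K+2*t)) * p2
  + ((1:Polynomial ℤ) - X^(1+2*K) - X^(2+2*K) + X^(3+4*K)) * e2

lemma cert0 (a i : ℕ) (ha : 1 ≤ a) :
    (1 - X^(a+i+1)) * Tt a (i+1) 0 - (1 - X^(3*a+i+1)) * Tt a i 0 = Gg a i 0 - Gg a i 1 := by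
  obtain ⟨A, rfl⟩ : ∃ A, a = A+1 := ⟨a-1, by omega⟩
  rw [Tt_zero, Tt_zero, Gg, if_pos (Or.inl rfl), Gg, if_neg (by omega)]
  rw [show A+1+1-1 = A+1 by omega, show i+1-1 = i by omega, show 2*1-2 = 0 by omega,
      qbinom_zero, show A+1-1 = A by omega,
      show 3*(A+1)+(i+1) = 3*A+i+4 by omega, show 3*(A+1)+i = 3*A+i+3 by omega]
  have hP := qbinom_pascal (3*A+i+3) A
  rw [show 3*A+i+3+1 = 3*A+i+4 by omega] at hP
  have hE := qbinom_contig (3*A+i+3) A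
  rw [show 3*A+i+3-A = 2*A+i+3 by omega] at hE
  linear_combination (1 - X^(A+1+i+1)) * X^((A+1)*(i+1)) * hP
    + X^((A+1)*i) * (1 + X^(A+1)) * hE

lemma cert (a i k : ℕ) (ha : 1 ≤ a) (hi : 1 ≤ i) (hk : k ≤ a) :
    (1 - X^(a+i+1)) * Tt a (i+1) k - (1 - X^(3*a+i+1)) * Tt a i k = Gg a i k - Gg a i (k+1) := by
  rcases Nat.eq_zero_or_pos k with rfl | hk1
  · exact cert0 a i ha
  obtain ⟨K, rfl⟩ : ∃ K, k = K+1 := ⟨k-1, by omega⟩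
  rcases le_or_gt (K+1) i with hle | hgt
  · -- k ≤ i
    rcases Nat.lt_or_ge (K+1) a with hlt | hge
    · -- main region: k < a
      obtain ⟨s, rfl⟩ : ∃ s, a = K+s+2 := ⟨a-K-2, by omega⟩
      obtain ⟨t, rfl⟩ : ∃ t, i = K+t+1 := ⟨i-K-1, by omega⟩
      rw [Tt_succ, Tt_succ, Gg, if_neg (by omega), Gg, if_neg (by omega)]
      rw [show K+s+2-(K+1) = s+1 by omega, show K+t+1+1-(K+1) = t+1 by omega,
          show K+t+1-(K+1) = t by omega,
          show K+t+1+1+K+1 = 2*K+t+3 by omega,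
          show K+s+2+(K+t+1+1) = 2*K+s+t+4 by omega,
          show K+t+1+1+K = 2*K+t+2 by omega,
          show 3*(K+s+2)+(K+t+1+1) = 4*K+3*s+t+8 by omega,
          show K+t+1+K+1 = 2*K+t+2 by omega,
          show K+s+2+(K+t+1) = 2*K+s+t+3 by omega,
          show K+t+1+K = 2*K+t+1 by omega,
          show 3*(K+s+2)+(K+t+1) = 4*K+3*s+t+7 by omega,
          show K+s+2+1-(K+1) = s+2 by omega,
          show 4*K+3*s+t+7+1 = 4*K+3*s+t+8 by omega,
          show 2*K+s+t+3+1 = 2*K+s+t+4 by omega,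
          show K+t+1+(K+1)-1 = 2*K+t+1 by omega,
          show 2*(K+1)-2 = 2*K by omega,
          show K+s+2+1-(K+1+1) = s+1 by omega,
          show K+t+1+1-(K+1+1) = t by omega,
          show K+t+1+(K+1+1)-1 = 2*K+t+2 by omega,
          show 2*(K+1+1)-2 = 2*K+2 by omega,
          show K+s+2-(K+1+1) = s by omega]
      exact cert_main K s t
    · -- k = a ≤ i
      have hKa : a = K+1 := by omega
      subst hKa
      obtain ⟨t, rfl⟩ : ∃ t, i = K+1+t := ⟨i-K-1, by omega⟩
      rw [Tt_succ, Tt_succ, Gg, if_neg (by omega), Gg, if_pos (Or.inr (by omega))]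
      simp only [show K+1-(K+1) = 0 by omega, Nat.zero_mul, pow_zero,
          show K+1+t+1+K+1 = 2*K+t+3 by omega,
          show K+1+(K+1+t+1) = 2*K+t+3 by omega,
          show K+1+t+1+K = 2*K+t+2 by omega,
          show 3*(K+1)+(K+1+t+1) = 4*K+t+5 by omega,
          show K+1+t+K+1 = 2*K+t+2 by omega,
          show K+1+(K+1+t) = 2*K+t+2 by omega,
          show K+1+t+K = 2*K+t+1 by omega,
          show 3*(K+1)+(K+1+t) = 4*K+t+4 by omega,
          show K+1+1-(K+1) = 1 by omega,
          show K+1+t+1-(K+1) = t+1 by omega,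
          show K+1+t-(K+1) = t by omega,
          show 4*K+t+4+1 = 4*K+t+5 by omega,
          show 2*K+t+2+1 = 2*K+t+3 by omega,
          show K+1+t+(K+1)-1 = 2*K+t+1 by omega,
          show 2*(K+1)-2 = 2*K by omega,
          show 1*(t+1) = t+1 by omega,
          qbinom_zero]
      linear_combination cert_diag K t
  · -- k ≥ i+1
    rcases Nat.eq_or_lt_of_le (show i+1 ≤ K+1 by omega) with heq | hgt2
    · -- k = i+1
      have hKi : K = i := by omega
      subst hKi
      obtain ⟨s, rfl⟩ : ∃ s, a = K+1+s := ⟨a-K-1, by omega⟩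
      rw [Tt_succ, Tt_succ, Gg, if_neg (by omega)]
      have hG2 : Gg (K+1+s) K (K+1+1) = 0 := by
        rw [Gg]
        rcases Nat.lt_or_ge (K+1+s) (K+1+1) with h2 | h2
        · rw [if_pos (Or.inr h2)]
        · rw [if_neg (by omega),
            qbinom_eq_zero (show K+(K+1+1)-1 < 2*(K+1+1)-2 by omega)]
          ring
      rw [hG2]
      rw [qbinom_eq_zero (show K+K+1 < 2*K+2 by omega),
          qbinom_eq_zero (show K+K < 2*K+1 by omega)]
      simp only [show K+1-(K+1) = 0 by omega, show K-(K+1) = 0 by omega,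
          Nat.mul_zero, pow_zero,
          show K+1+K+1 = 2*K+2 by omega, show K+1+K = 2*K+1 by omega,
          show K+1+s+(K+1) = 2*K+s+2 by omega,
          show K+1+s+K+1 = 2*K+s+2 by omega,
          show 3*(K+1+s)+(K+1) = 4*K+3*s+4 by omega,
          show 3*(K+1+s)+K+1 = 4*K+3*s+4 by omega,
          show 3*(K+1+s)+K = 4*K+3*s+3 by omega,
          show K+1+s-(K+1) = s by omega,
          show K+1+s+1-(K+1) = s+1 by omega,
          show K+(K+1)-1 = 2*K by omega, show 2*(K+1)-2 = 2*K by omega,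
          show 4*K+3*s+3+1 = 4*K+3*s+4 by omega,
          show 2*K+s+2+1 = 2*K+s+3 by omega,
          qbinom_self]
      have TS := qbinom_top_shift (4*K+3*s+3) s
      rw [show 4*K+3*s+3+1 = 4*K+3*s+4 by omega,
          show 4*K+3*s+3+1-s = 4*K+2*s+4 by omega] at TS
      linear_combination -TS
    · -- k ≥ i+2 : everything vanishes
      rw [Tt_succ, Tt_succ]
      have hG1 : Gg a i (K+1) = 0 := by
        rw [Gg, if_neg (by omega),
          qbinom_eq_zero (show i+(K+1)-1 < 2*(K+1)-2 by omega)]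
        ring
      have hG2 : Gg a i (K+1+1) = 0 := by
        rw [Gg]
        rcases Nat.lt_or_ge a (K+1+1) with h2 | h2
        · rw [if_pos (Or.inr h2)]
        · rw [if_neg (by omega),
            qbinom_eq_zero (show i+(K+1+1)-1 < 2*(K+1+1)-2 by omega)]
          ring
      rw [hG1, hG2,
        qbinom_eq_zero (show i+1+K+1 < 2*K+2 by omega),
        qbinom_eq_zero (show i+1+K < 2*K+1 by omega),
        qbinom_eq_zero (show i+K+1 < 2*K+2 by omega),
        qbinom_eq_zero (show i+K < 2*K+1 by omega)]
      ring

lemma Ssum_step (a i : ℕ) (ha : 1 ≤ a) (hi : 1 ≤ i) :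
    (1-X^(a+i+1)) * (∑ k ∈ Finset.range (a+1), Tt a (i+1) k) =
      (1-X^(3*a+i+1)) * (∑ k ∈ Finset.range (a+1), Tt a i k) := by
  rw [Finset.mul_sum, Finset.mul_sum, ← sub_eq_zero, ← Finset.sum_sub_distrib]
  have h : ∀ k ∈ Finset.range (a+1),
      (1-X^(a+i+1)) * Tt a (i+1) k - (1-X^(3*a+i+1)) * Tt a i k = Gg a i k - Gg a i (k+1) := by
    intro k hk
    exact cert a i k ha hi (by simp only [Finset.mem_range] at hk; omega)
  rw [Finset.sum_congr rfl h, Finset.sum_range_sub' (Gg a i) (a+1),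
    Gg, if_pos (Or.inl rfl), Gg, if_pos (Or.inr (by omega))]
  ring

lemma lhs_step (a i : ℕ) :
    (1-X^(a+i+1)) * qbinom (3*a+(i+1)) (a+(i+1)) = (1-X^(3*a+i+1)) * qbinom (3*a+i) (a+i) := by
  have hP := qbinom_pascal (3*a+i) (a+i)
  have hE := qbinom_contig (3*a+i) (a+i)
  rw [show 3*a+i-(a+i) = 2*a by omega] at hE
  rw [show 3*a+(i+1) = 3*a+i+1 by omega, show a+(i+1) = a+i+1 by omega]
  linear_combination (1-X^(a+i+1)) * hP - X^(a+i+1) * hE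

lemma base_case (a : ℕ) (ha : 1 ≤ a) :
    qbinom (3*a+1) (a+1) = ∑ k ∈ Finset.range (a+1), Tt a 1 k := by
  have hz : ∀ k ∈ Finset.Ico 2 (a+1), Tt a 1 k = 0 := by
    intro k hk
    simp only [Finset.mem_Ico] at hk
    obtain ⟨j, rfl⟩ : ∃ j, k = j+1+1 := ⟨k-2, by omega⟩
    rw [Tt_succ,
      qbinom_eq_zero (show 1+(j+1)+1 < 2*(j+1)+2 by omega),
      qbinom_eq_zero (show 1+(j+1) < 2*(j+1)+1 by omega)]
    ring
  have hsplit : Finset.range (a+1) = insert 0 (insert 1 (Finset.Ico 2 (a+1))) := by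
    ext x
    simp only [Finset.mem_range, Finset.mem_insert, Finset.mem_Ico]
    omega
  rw [hsplit, Finset.sum_insert (by simp), Finset.sum_insert (by simp),
      Finset.sum_eq_zero hz, add_zero, Tt_zero, Tt_succ]
  obtain ⟨A, rfl⟩ : ∃ A, a = A+1 := ⟨a-1, by omega⟩
  rw [show A+1-(0+1) = A by omega, show (1:ℕ)-(0+1) = 0 by omega, Nat.mul_zero, pow_zero]
  norm_num [qbinom_self]
  rw [show 3*(A+1)+1 = 3*A+4 by omega]
  have r1 := qbinom_contig (3*A+4) (A+1)
  rw [show 3*A+4-(A+1) = 2*A+3 by omega] at r1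
  have r2 := qbinom_contig (3*A+4) A
  rw [show 3*A+4-A = 2*A+4 by omega] at r2
  apply cancel_factor A
  apply cancel_factor (A+1)
  linear_combination (-(1-X^(A+1))) * r1 - (1-X^(A+1)) * r2


/-- For positive integers `a`, `i`:
`[3a+i choose a+i]_q = ∑_{k ≥ 0} q^{(a−k)(i−k)} ([i+k choose 2k]_q + q^{a+i} [i+k−1 choose 2k−1]_q) [3a+i choose a−k]_q`.
Terms with `k > a` vanish (negative lower index `a − k`), so the sum is over
`0 ≤ k ≤ a`; `[i+k−1 choose 2k−1]_q` is `0` when `k = 0` since `2k−1 = −1 < 0`. -/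
theorem qbinom_sum_identity (a i : ℕ) (ha : 0 < a) (hi : 0 < i) :
    qbinom (3 * a + i) (a + i) =
      ∑ k ∈ Finset.range (a + 1),
        Polynomial.X ^ ((a - k) * (i - k)) *
          (qbinom (i + k) (2 * k) +
            Polynomial.X ^ (a + i) * qbinomZ (i + k - 1) (2 * (k : ℤ) - 1)) *
          qbinom (3 * a + i) (a - k) := by
  show qbinom (3*a+i) (a+i) = ∑ k ∈ Finset.range (a+1), Tt a i k
  induction i, hi using Nat.le_induction with
  | base => exact base_case a ha
  | succ i hi1 IH =>
    apply cancel_factor (a+i)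
    calc (1-X^(a+i+1)) * qbinom (3*a+(i+1)) (a+(i+1))
        = (1-X^(3*a+i+1)) * qbinom (3*a+i) (a+i) := lhs_step a i
      _ = (1-X^(3*a+i+1)) * ∑ k ∈ Finset.range (a+1), Tt a i k := by rw [IH]
      _ = (1-X^(a+i+1)) * ∑ k ∈ Finset.range (a+1), Tt a (i+1) k := (Ssum_step a i ha hi1).symm
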